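/- arXiv:1110.1538 — 5 statements merged into one kernel-verified Lean document; each statement's English description precedes it below -/
import Mathlib

section
/- A finite ring R (associative with 1) is a left chain ring (its left ideals are totally ordered by inclusion) if and only if it is a right chain ring (its right ideals are totally ordered by inclusion). -/
/-!
A finite left chain ring `R` is local, and its maximal ideal `J` is nilpotent and principal as a
left ideal, `J = Rθ`. The additive maps `r ↦ rθ` and `r ↦ θr` into `R / Rθ²` both have kernel
`J`, so their images have the same size; since `θR ⊆ Rθ`, the images coincide. This gives
`J = θR + Jθ`, hence `J = θR` by nilpotency, and then every nonzero element is `θ ^ k` times a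
unit, so the principal right ideals form a chain too. The converse is the same argument in `Rᵐᵒᵖ`.
-/

open MulOpposite

theorem AddMonoidHom.range_eq_of_ker_eq {G H : Type*} [AddGroup G] [AddGroup H] [Finite H]
    {f g : G →+ H} (hker : f.ker = g.ker) (hle : g.range ≤ f.range) : g.range = f.range :=
  AddSubgroup.eq_of_le_of_card_ge hle <| by
    rw [← AddSubgroup.index_ker, ← AddSubgroup.index_ker, hker]

section

variable {S : Type*} [Ring S]

theorem Ideal.mem_span_singleton_iff_rightDvd {x y : S} : x ∈ Ideal.span {y} ↔ y ∣ᵣ x := by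
  rw [Ideal.mem_span_singleton']
  exact exists_congr fun _ => eq_comm

theorem Ideal.le_or_le_iff_rightDvd_or_rightDvd :
    (∀ I J : Ideal S, I ≤ J ∨ J ≤ I) ↔ ∀ a b : S, a ∣ᵣ b ∨ b ∣ᵣ a := by
  refine ⟨fun h a b => ?_, fun h I J => ?_⟩
  · simpa only [Ideal.span_singleton_le_iff_mem, Ideal.mem_span_singleton_iff_rightDvd, or_comm]
      using h (Ideal.span {a}) (Ideal.span {b})
  · by_contra! hIJ
    obtain ⟨⟨a, haI, haJ⟩, ⟨b, hbJ, hbI⟩⟩ :=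
      hIJ.imp SetLike.not_le_iff_exists.mp SetLike.not_le_iff_exists.mp
    rcases h a b with ⟨c, rfl⟩ | ⟨c, rfl⟩
    · exact hbI (I.mul_mem_left c haI)
    · exact haJ (J.mul_mem_left c hbJ)

theorem MulOpposite.rightDvd_iff_unop_dvd_unop {a b : Sᵐᵒᵖ} : a ∣ᵣ b ↔ unop a ∣ unop b :=
  ⟨fun ⟨c, hc⟩ => ⟨unop c, by rw [hc, unop_mul]⟩,
    fun ⟨c, hc⟩ => ⟨op c, by rw [← op_unop b, hc, op_mul, op_unop]⟩⟩

theorem IsLocalRing.of_rightDvd_total [Nontrivial S] [IsDedekindFiniteMonoid S]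
    (hS : ∀ a b : S, a ∣ᵣ b ∨ b ∣ᵣ a) : IsLocalRing S :=
  .of_is_unit_or_is_unit_of_add_one fun {a b} hab => by
    rcases hS a b with ⟨c, rfl⟩ | ⟨c, rfl⟩
    · exact .inl (.of_mul_eq_one_right (1 + c) (by rw [add_mul, one_mul, hab]))
    · exact .inr (.of_mul_eq_one_right (c + 1) (by rw [add_mul, one_mul, hab]))

theorem IsLocalRing.eq_zero_of_eq_mul_of_not_isUnit [IsLocalRing S] {n x : S} (hn : ¬IsUnit n)
    (h : x = n * x) : x = 0 := by
  obtain ⟨u, hu⟩ := (isUnit_or_isUnit_of_add_one (add_sub_cancel n 1)).resolve_left hn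
  calc x = ↑u⁻¹ * ((1 - n) * x) := by rw [← hu, ← mul_assoc, Units.inv_mul, one_mul]
    _ = 0 := by rw [sub_mul, one_mul, ← h, sub_self, mul_zero]

theorem IsLocalRing.isNilpotent_of_not_isUnit [IsLocalRing S] [Finite S] {x : S}
    (hx : ¬IsUnit x) : IsNilpotent x := by
  obtain ⟨i, j, hij, h⟩ := Finite.exists_ne_map_eq_of_infinite (x ^ · : ℕ → S)
  wlog hlt : i < j generalizing i j
  · exact this j i hij.symm h.symm (by omega)
  refine ⟨i, eq_zero_of_eq_mul_of_not_isUnit (n := x ^ (j - i)) ?_ ?_⟩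
  · rwa [isUnit_pow_iff (by omega)]
  · rw [← pow_add, Nat.sub_add_cancel hlt.le]
    exact h

theorem exists_forall_rightDvd_of_finite (hS : ∀ a b : S, a ∣ᵣ b ∨ b ∣ᵣ a) {s : Set S}
    (hs : s.Finite) (hne : s.Nonempty) : ∃ θ ∈ s, ∀ x ∈ s, θ ∣ᵣ x := by
  obtain ⟨θ, hθ, hmax⟩ := hs.exists_maximalFor (fun x => Ideal.span {x}) s hne
  refine ⟨θ, hθ, fun x hx => (hS θ x).elim id fun hxθ => ?_⟩
  simp only [← Ideal.mem_span_singleton_iff_rightDvd, ← Ideal.span_singleton_le_iff_mem] at hxθ ⊢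
  exact hmax hx hxθ

def IsLeftUniformizer (θ : S) : Prop := ∀ x : S, ¬IsUnit x ↔ θ ∣ᵣ x

theorem exists_isLeftUniformizer [Finite S] [Nontrivial S]
    (hS : ∀ a b : S, a ∣ᵣ b ∨ b ∣ᵣ a) : ∃ θ : S, IsLeftUniformizer θ := by
  obtain ⟨θ, hθ, hdvd⟩ := exists_forall_rightDvd_of_finite hS (s := {x : S | ¬IsUnit x})
    (Set.toFinite _) ⟨0, not_isUnit_zero⟩
  exact ⟨θ, fun x => ⟨hdvd x, fun ⟨c, hc⟩ => hc ▸ fun h => hθ (isUnit_of_mul_isUnit_right h)⟩⟩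

namespace IsLeftUniformizer

variable {θ : S}

theorem not_isUnit (hθ : IsLeftUniformizer θ) : ¬IsUnit θ :=
  (hθ θ).mpr .rfl

section

variable [IsDedekindFiniteMonoid S]

theorem rightDvd_mul (hθ : IsLeftUniformizer θ) (r : S) : θ ∣ᵣ θ * r :=
  (hθ _).mp fun h => hθ.not_isUnit (isUnit_of_mul_isUnit_left h)

theorem sq_rightDvd_mul_right (hθ : IsLeftUniformizer θ) {x : S} (hx : θ ^ 2 ∣ᵣ x) (r : S) :
    θ ^ 2 ∣ᵣ x * r := by
  obtain ⟨t, rfl⟩ := hx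
  obtain ⟨s, hs⟩ := hθ.rightDvd_mul r
  obtain ⟨u, hu⟩ := hθ.rightDvd_mul s
  refine ⟨t * u, ?_⟩
  calc t * θ ^ 2 * r = t * (θ * s) * θ := by simp only [sq, mul_assoc, hs]
    _ = t * u * θ ^ 2 := by rw [hu, sq]; simp only [mul_assoc]

variable [IsLocalRing S]

theorem eq_zero_of_sq_rightDvd (hθ : IsLeftUniformizer θ) (h : θ ^ 2 ∣ᵣ θ) : θ = 0 := by
  obtain ⟨t, ht⟩ := h
  refine IsLocalRing.eq_zero_of_eq_mul_of_not_isUnit (n := t * θ)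
    (fun hu => hθ.not_isUnit (isUnit_of_mul_isUnit_right hu)) ?_
  rwa [sq, ← mul_assoc] at ht

theorem sq_rightDvd_mul_self_iff (hθ : IsLeftUniformizer θ) (hθ0 : θ ≠ 0) (r : S) :
    θ ^ 2 ∣ᵣ r * θ ↔ ¬IsUnit r := by
  refine ⟨fun h ⟨u, hu⟩ => hθ0 (hθ.eq_zero_of_sq_rightDvd ?_), fun hr => ?_⟩
  · simpa [← hu] using h.mul_left ↑u⁻¹
  · obtain ⟨s, rfl⟩ := (hθ r).mp hr
    exact ⟨s, by rw [sq, mul_assoc]⟩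

theorem sq_rightDvd_self_mul_iff (hθ : IsLeftUniformizer θ) (hθ0 : θ ≠ 0) (r : S) :
    θ ^ 2 ∣ᵣ θ * r ↔ ¬IsUnit r := by
  refine ⟨fun h ⟨u, hu⟩ => hθ0 (hθ.eq_zero_of_sq_rightDvd ?_), fun hr => ?_⟩
  · simpa [← hu, mul_assoc] using hθ.sq_rightDvd_mul_right h ↑u⁻¹
  · obtain ⟨s, rfl⟩ := (hθ r).mp hr
    obtain ⟨t, ht⟩ := hθ.rightDvd_mul s
    exact ⟨t, by rw [← mul_assoc, ht, sq, mul_assoc]⟩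

end

variable [IsLocalRing S] [Finite S]

theorem exists_eq_mul_add_mul (hθ : IsLeftUniformizer θ) {x : S} (hx : ¬IsUnit x) :
    ∃ s y, ¬IsUnit y ∧ x = θ * s + y * θ := by
  by_cases hθ0 : θ = 0
  · obtain ⟨c, rfl⟩ := (hθ x).mp hx
    exact ⟨0, 0, not_isUnit_zero, by rw [hθ0]; simp⟩
  let K := (Ideal.span {θ ^ 2}).toAddSubgroup
  have hK (z : S) : z ∈ K ↔ θ ^ 2 ∣ᵣ z := Ideal.mem_span_singleton_iff_rightDvd
  let f := (QuotientAddGroup.mk' K).comp (AddMonoidHom.mulRight θ)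
  let g := (QuotientAddGroup.mk' K).comp (AddMonoidHom.mulLeft θ)
  have hker : f.ker = g.ker := by
    ext r
    simp only [f, g, AddMonoidHom.mem_ker, AddMonoidHom.comp_apply, QuotientAddGroup.mk'_apply,
      QuotientAddGroup.eq_zero_iff, hK, AddMonoidHom.coe_mulRight, AddMonoidHom.coe_mulLeft,
      hθ.sq_rightDvd_mul_self_iff hθ0, hθ.sq_rightDvd_self_mul_iff hθ0]
  have hle : g.range ≤ f.range := by
    rintro _ ⟨r, rfl⟩
    obtain ⟨s, hs⟩ := hθ.rightDvd_mul r
    exact ⟨s, by simp [f, g, hs]⟩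
  obtain ⟨r, rfl⟩ := (hθ x).mp hx
  obtain ⟨s, hs⟩ : f r ∈ g.range := (AddMonoidHom.range_eq_of_ker_eq hker hle).ge ⟨r, rfl⟩
  obtain ⟨t, ht⟩ := (hK _).mp (QuotientAddGroup.eq.mp hs)
  refine ⟨s, t * θ, fun hu => hθ.not_isUnit (isUnit_of_mul_isUnit_right hu), ?_⟩
  simp only [AddMonoidHom.coe_mulLeft, AddMonoidHom.coe_mulRight] at ht
  rw [mul_assoc, ← sq, ← ht, add_neg_cancel_left]

theorem exists_eq_mul_add_mul_pow (hθ : IsLeftUniformizer θ) {x : S} (hx : ¬IsUnit x) (k : ℕ) :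
    ∃ s y, ¬IsUnit y ∧ x = θ * s + y * θ ^ k := by
  induction k with
  | zero => exact ⟨0, x, hx, by simp⟩
  | succ k ih =>
    obtain ⟨s, y, hy, rfl⟩ := ih
    obtain ⟨s', y', hy', rfl⟩ := hθ.exists_eq_mul_add_mul hy
    exact ⟨s + s' * θ ^ k, y', hy', by rw [pow_succ']; noncomm_ring⟩

theorem dvd_of_not_isUnit (hθ : IsLeftUniformizer θ) {x : S} (hx : ¬IsUnit x) : θ ∣ x := by
  obtain ⟨N, hN⟩ := IsLocalRing.isNilpotent_of_not_isUnit hθ.not_isUnit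
  obtain ⟨s, y, -, hxy⟩ := hθ.exists_eq_mul_add_mul_pow hx N
  exact ⟨s, by rw [hxy, hN, mul_zero, add_zero]⟩

theorem eq_zero_or_associated_pow (hθ : IsLeftUniformizer θ) (x : S) :
    x = 0 ∨ ∃ k, Associated (θ ^ k) x := by
  obtain ⟨N, hN⟩ := IsLocalRing.isNilpotent_of_not_isUnit hθ.not_isUnit
  suffices ∀ d n (c : S), n + d = N → θ ^ n * c = 0 ∨ ∃ k, Associated (θ ^ k) (θ ^ n * c) by
    simpa using this N 0 x (zero_add N)
  intro d
  induction d with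
  | zero => exact fun n c h => .inl (by rw [add_zero] at h; rw [h, hN, zero_mul])
  | succ d ih =>
    intro n c h
    by_cases hc : IsUnit c
    · exact .inr ⟨n, hc.unit, rfl⟩
    · obtain ⟨c', rfl⟩ := hθ.dvd_of_not_isUnit hc
      simpa only [← mul_assoc, ← pow_succ] using ih (n + 1) c' (by omega)

theorem dvd_or_dvd (hθ : IsLeftUniformizer θ) (a b : S) : a ∣ b ∨ b ∣ a := by
  rcases hθ.eq_zero_or_associated_pow a with rfl | ⟨k, hk⟩
  · exact .inr (dvd_zero b)
  rcases hθ.eq_zero_or_associated_pow b with rfl | ⟨l, hl⟩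
  · exact .inl (dvd_zero a)
  rw [← hk.dvd_iff_dvd_left, ← hk.dvd_iff_dvd_right, ← hl.dvd_iff_dvd_left,
    ← hl.dvd_iff_dvd_right]
  exact (le_total k l).imp (pow_dvd_pow θ) (pow_dvd_pow θ)

end IsLeftUniformizer

theorem dvd_or_dvd_of_rightDvd_or_rightDvd [Finite S] (hS : ∀ a b : S, a ∣ᵣ b ∨ b ∣ᵣ a)
    (a b : S) : a ∣ b ∨ b ∣ a := by
  cases subsingleton_or_nontrivial S
  · exact .inl ⟨0, Subsingleton.elim _ _⟩
  have := IsLocalRing.of_rightDvd_total hS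
  obtain ⟨θ, hθ⟩ := exists_isLeftUniformizer hS
  exact hθ.dvd_or_dvd a b

end

/-- A finite ring is a left chain ring iff it is a right chain ring. -/
theorem finite_left_chain_iff_right_chain (R : Type*) [Ring R] [Fintype R] :
    (∀ I J : Ideal R, I ≤ J ∨ J ≤ I) ↔
      (∀ I J : Ideal Rᵐᵒᵖ, I ≤ J ∨ J ≤ I) := by
  have : Finite Rᵐᵒᵖ := .of_equiv R opEquiv
  rw [Ideal.le_or_le_iff_rightDvd_or_rightDvd, Ideal.le_or_le_iff_rightDvd_or_rightDvd]
  refine ⟨fun h a b => ?_, fun h a b => ?_⟩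
  · simpa only [rightDvd_iff_unop_dvd_unop] using
      dvd_or_dvd_of_rightDvd_or_rightDvd h a.unop b.unop
  · simpa only [rightDvd_iff_op_dvd_op] using
      dvd_or_dvd_of_rightDvd_or_rightDvd h (op a) (op b)
end

section
/- A finite ring R is a left chain ring if and only if R is local and its Jacobson radical is a principal left ideal. -/
/-!
A finite ring is Artinian, hence Noetherian and Dedekind-finite (one-sided inverses are
two-sided), and its radical is nilpotent.

If the left ideals form a chain, two nonunits `a + b = 1` would put `1` into `R a` or `R b`,
making one of them left and hence two-sided invertible; so `R` is local. The radical is finitely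
generated, and in a chain a finitely generated left ideal is generated by its largest generator.

Conversely, let `R` be local with `rad R = R a`. The nonunits are exactly `rad R`, and `a` is
nilpotent. Writing `x = r a ^ k`, either `r` is a unit or `r ∈ R a`, and then `x ∈ R a ^ (k + 1)`;
since `a ^ n = 0` this stops, so every `R x` is one of `R ⊇ R a ⊇ R a ^ 2 ⊇ ⋯`. Left ideals whose
cyclic submodules are totally ordered are themselves totally ordered.
-/

open Ideal

namespace Submodule

variable {R M : Type*} [Semiring R] [AddCommMonoid M] [Module R M]

theorem isPrincipal_of_fg_of_le_total (htot : ∀ N N' : Submodule R M, N ≤ N' ∨ N' ≤ N)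
    {N : Submodule R M} (hN : N.FG) : N.IsPrincipal := by
  induction N, hN using Submodule.fg_induction with
  | singleton x => exact ⟨x, rfl⟩
  | sup N₁ N₂ _ _ h₁ h₂ =>
    rcases htot N₁ N₂ with h | h
    · rwa [sup_eq_right.2 h]
    · rwa [sup_eq_left.2 h]

theorem le_total_of_span_singleton_le_total (h : ∀ x y : M, R ∙ x ≤ R ∙ y ∨ R ∙ y ≤ R ∙ x)
    (N N' : Submodule R M) : N ≤ N' ∨ N' ≤ N := by
  refine or_iff_not_imp_left.2 fun hNN' y hy => ?_
  obtain ⟨x, hxN, hxN'⟩ := SetLike.not_le_iff_exists.1 hNN'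
  have hyx : R ∙ y ≤ R ∙ x := (h x y).resolve_left fun hxy =>
    hxN' ((span_singleton_le_iff_mem y N').2 hy (hxy (mem_span_singleton_self x)))
  exact (span_singleton_le_iff_mem x N).2 hxN (hyx (mem_span_singleton_self y))

end Submodule

section Ring

variable {R : Type*} [Ring R]

theorem IsLocalRing.of_le_total [Nontrivial R] [IsDedekindFiniteMonoid R]
    (h : ∀ I J : Ideal R, I ≤ J ∨ J ≤ I) : IsLocalRing R := by
  have key : ∀ {a b : R}, a + b = 1 → span {a} ≤ span {b} → IsUnit b := fun {a b} hab hle => by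
    obtain ⟨r, hr⟩ := mem_span_singleton'.1 <|
      hab ▸ add_mem (hle (mem_span_singleton_self a)) (mem_span_singleton_self b)
    exact .of_mul_eq_one_right r hr
  exact ⟨fun {a b} hab => (h (span {b}) (span {a})).imp (key ((add_comm b a).trans hab)) (key hab)⟩

theorem Ideal.mem_jacobson_bot_iff_not_isUnit [IsLocalRing R] [IsDedekindFiniteMonoid R] {x : R} :
    x ∈ jacobson ⊥ ↔ ¬IsUnit x := by
  refine ⟨fun hx hu => ?_, fun hx => mem_jacobson_iff.2 fun y => ?_⟩
  · exact bot_ne_top (jacobson_eq_top_iff.1 (eq_top_of_isUnit_mem _ hx hu))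
  · have hyx : ¬IsUnit (y * x) := fun hu => by
      obtain ⟨w, hw⟩ := hu.exists_left_inv
      exact hx (.of_mul_eq_one_right (w * y) (by rw [mul_assoc, hw]))
    have : IsUnit (y * x + 1) := ((IsLocalRing.isUnit_or_isUnit_of_add_one
      (neg_add_cancel_left (y * x) 1)).resolve_left (by rwa [IsUnit.neg_iff]))
    obtain ⟨z, hz⟩ := this.exists_left_inv
    exact ⟨z, by rw [mul_assoc, ← mul_add_one, hz, sub_self]; exact zero_mem _⟩

theorem Ideal.span_singleton_pow_antitone (a : R) : Antitone fun k : ℕ => span {a ^ k} :=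
  fun m k hmk => (span_singleton_le_iff_mem _).2 <| mem_span_singleton'.2
    ⟨a ^ (k - m), by rw [← pow_add, Nat.sub_add_cancel hmk]⟩

theorem IsNilpotent.of_mem_jacobson_bot [IsArtinianRing R] {a : R} (ha : a ∈ jacobson ⊥) :
    IsNilpotent a := by
  obtain ⟨n, hn⟩ := IsArtinianRing.isNilpotent_jacobson_bot (R := R)
  have := Submodule.pow_mem_pow _ ha n
  rw [hn] at this
  exact ⟨n, by simpa using this⟩

theorem Ideal.exists_span_singleton_eq_span_pow [IsLocalRing R] [IsDedekindFiniteMonoid R]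
    {a : R} (hJ : jacobson ⊥ = span {a}) (ha : IsNilpotent a) (x : R) :
    ∃ k : ℕ, span {x} = span {a ^ k} := by
  obtain ⟨n, hn⟩ := ha
  -- `j` lowers the exponent `n - j` from `a ^ n = 0` down to `a ^ 0 = 1`
  suffices ∀ j, ∀ x ∈ span {a ^ (n - j)}, ∃ k : ℕ, span {x} = span {a ^ k} from
    this n x (by simp)
  intro j
  induction j with
  | zero => exact fun x hx => ⟨n, by simp_all⟩
  | succ j ih =>
    intro x hx
    obtain ⟨r, rfl⟩ := mem_span_singleton'.1 hx
    by_cases hr : IsUnit r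
    · exact ⟨_, span_singleton_mul_left_unit hr _⟩
    obtain ⟨s, rfl⟩ := mem_span_singleton'.1 (hJ ▸ mem_jacobson_bot_iff_not_isUnit.2 hr)
    refine ih _ (span_singleton_pow_antitone a (show n - j ≤ n - (j + 1) + 1 by omega) ?_)
    rw [mul_assoc, ← pow_succ']
    exact mul_mem_left _ _ (mem_span_singleton_self _)

end Ring

/-- A finite ring is a left chain ring iff it is local and its Jacobson
radical is a principal left ideal. -/
theorem finite_left_chain_iff_local_principal_radical (R : Type*) [Ring R] [Fintype R]
    [Nontrivial R] :
    (∀ I J : Ideal R, I ≤ J ∨ J ≤ I) ↔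
      (IsLocalRing R ∧ ∃ a : R, Ideal.jacobson (⊥ : Ideal R) = Ideal.span {a}) := by
  constructor
  · intro h
    obtain ⟨a, ha⟩ := (Submodule.isPrincipal_of_fg_of_le_total h
      (IsNoetherian.noetherian (jacobson ⊥))).principal
    exact ⟨.of_le_total h, a, ha⟩
  · rintro ⟨_, a, ha⟩
    have hnil : IsNilpotent a := .of_mem_jacobson_bot (ha ▸ mem_span_singleton_self a)
    refine Submodule.le_total_of_span_singleton_le_total fun x y => ?_
    obtain ⟨k, hk⟩ := exists_span_singleton_eq_span_pow ha hnil x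
    obtain ⟨m, hm⟩ := exists_span_singleton_eq_span_pow ha hnil y
    simp only [submodule_span_eq, hk, hm]
    exact (le_total m k).imp (fun h => span_singleton_pow_antitone a h)
      (fun h => span_singleton_pow_antitone a h)
end

section
/- Let R be a finite ring and x, y ∈ R. If Rx = Ry as left ideals, then R^× x = R^× y, i.e. y = ux for some unit u ∈ R^×. -/
/-!
Write `y = a * x` and `x = b * y`. Left multiplications by `a` and `b` are endomorphisms `α`, `β`
of `R` as a right `R`-module, with `β (α x) = x`. Fitting decompositions of `β * α` and `α * β`
split `R = K ⊕ A = K' ⊕ A'`, where `α` maps the Fitting range `A ∋ x` isomorphically onto `A'`.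
For finite modules direct summands cancel (Lovász: a finite module `B` is determined by the
numbers `|Hom(X, B)|`), so `K ≅ K'`, and gluing gives an automorphism of `R_R` sending `x` to `y`;
it is left multiplication by a unit.
-/

open Function

section FiniteModule

variable {S : Type*} [Ring S] {X B : Type*} [AddCommGroup X] [Module S X]
  [AddCommGroup B] [Module S B]

instance LinearMap.finite_of_finite [Finite X] [Finite B] : Finite (X →ₗ[S] B) :=
  Finite.of_injective _ DFunLike.coe_injective

instance Submodule.finite_quotient [Finite X] (N : Submodule S X) : Finite (X ⧸ N) :=
  Finite.of_surjective _ N.mkQ_surjective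

theorem Submodule.card_quotient_lt [Finite X] {N : Submodule S X} (hN : N ≠ ⊥) :
    Nat.card (X ⧸ N) < Nat.card X := by
  have hcard : Nat.card X = Nat.card (X ⧸ N) * Nat.card N :=
    AddSubgroup.card_eq_card_quotient_mul_card_addSubgroup N.toAddSubgroup
  have hN_card : 1 < Nat.card N :=
    N.toAddSubgroup.one_lt_card_iff_ne_bot.mpr fun h => hN (Submodule.toAddSubgroup_injective h)
  rw [hcard]
  exact lt_mul_of_one_lt_right Nat.card_pos hN_card

noncomputable def LinearMap.kerEqEquivInjective (N : Submodule S X) :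
    {f : X →ₗ[S] B // ker f = N} ≃ {g : (X ⧸ N) →ₗ[S] B // Injective g} where
  toFun f := ⟨N.liftQ f.1 f.2.ge, by
    rw [← ker_eq_bot, Submodule.ker_liftQ, f.2, Submodule.mkQ_map_self]⟩
  invFun g := ⟨g.1.comp N.mkQ, by
    rw [ker_comp, ker_eq_bot.mpr g.2, Submodule.comap_bot, Submodule.ker_mkQ]⟩
  left_inv f := Subtype.ext (N.liftQ_mkQ _ _)
  right_inv g := Subtype.ext (Submodule.linearMap_qext _ (N.liftQ_mkQ _ _))

theorem LinearMap.card_eq_sum_card_ker_eq [Finite X] [Finite B] [Fintype (Submodule S X)] :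
    Nat.card (X →ₗ[S] B) = ∑ N : Submodule S X, Nat.card {f : X →ₗ[S] B // ker f = N} := by
  rw [← Nat.card_sigma, Nat.card_congr (Equiv.sigmaFiberEquiv _)]

end FiniteModule

section Cancellation

universe u

variable {S : Type*} [Ring S] {B C : Type u} [AddCommGroup B] [Module S B] [Finite B]
  [AddCommGroup C] [Module S C] [Finite C]

/-- Sorting maps by their kernel `N`, `|Hom(X, B)| = ∑ N, |Inj(X ⧸ N, B)|`; all terms but `N = ⊥`
are settled by induction on `|X|`. -/
theorem card_injective_linearMap_eq_of_card_linearMap_eq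
    (H : ∀ (X : Type u) [AddCommGroup X] [Module S X] [Finite X],
      Nat.card (X →ₗ[S] B) = Nat.card (X →ₗ[S] C))
    (X : Type u) [AddCommGroup X] [Module S X] [Finite X] :
    Nat.card {g : X →ₗ[S] B // Injective g} = Nat.card {g : X →ₗ[S] C // Injective g} := by
  induction hn : Nat.card X using Nat.strong_induction_on generalizing X with
  | _ n ih =>
  classical
  have : Fintype (Submodule S X) := Fintype.ofFinite _
  have hsum := H X
  rw [LinearMap.card_eq_sum_card_ker_eq, LinearMap.card_eq_sum_card_ker_eq,
    ← Finset.add_sum_erase _ _ (Finset.mem_univ ⊥),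
    ← Finset.add_sum_erase _ _ (Finset.mem_univ ⊥)] at hsum
  have hrest : ∀ N ∈ Finset.univ.erase (⊥ : Submodule S X),
      Nat.card {f : X →ₗ[S] B // LinearMap.ker f = N} =
        Nat.card {f : X →ₗ[S] C // LinearMap.ker f = N} := by
    intro N hN
    rw [Nat.card_congr (LinearMap.kerEqEquivInjective N),
      Nat.card_congr (LinearMap.kerEqEquivInjective N)]
    exact ih _ (hn ▸ Submodule.card_quotient_lt (Finset.ne_of_mem_erase hN)) _ rfl
  rw [Finset.sum_congr rfl hrest, Nat.add_right_cancel_iff] at hsum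
  simpa only [LinearMap.ker_eq_bot] using hsum

theorem nonempty_linearEquiv_of_card_linearMap_eq
    (H : ∀ (X : Type u) [AddCommGroup X] [Module S X] [Finite X],
      Nat.card (X →ₗ[S] B) = Nat.card (X →ₗ[S] C)) :
    Nonempty (B ≃ₗ[S] C) := by
  have exists_injective (D E : Type u) [AddCommGroup D] [Module S D] [Finite D]
      [AddCommGroup E] [Module S E] [Finite E]
      (h : Nat.card {g : D →ₗ[S] D // Injective g} = Nat.card {g : D →ₗ[S] E // Injective g}) :
      ∃ g : D →ₗ[S] E, Injective g := by
    have hpos : 0 < Nat.card {g : D →ₗ[S] D // Injective g} :=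
      Finite.card_pos_iff.mpr ⟨⟨LinearMap.id, injective_id⟩⟩
    obtain ⟨g, hg⟩ := Finite.card_pos_iff.mp (h ▸ hpos)
    exact ⟨g, hg⟩
  obtain ⟨f, hf⟩ := exists_injective B C
    (card_injective_linearMap_eq_of_card_linearMap_eq H B)
  obtain ⟨g, hg⟩ := exists_injective C B
    (card_injective_linearMap_eq_of_card_linearMap_eq (fun X _ _ _ => (H X).symm) C)
  exact ⟨.ofBijective f (hf.bijective_of_nat_card_le (Nat.card_le_card_of_injective g hg))⟩

theorem nonempty_linearEquiv_of_prod_equiv_prod {A : Type u} [AddCommGroup A] [Module S A]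
    [Finite A] (e : (B × A) ≃ₗ[S] (C × A)) : Nonempty (B ≃ₗ[S] C) := by
  refine nonempty_linearEquiv_of_card_linearMap_eq fun X _ _ _ => ?_
  have hprod (D : Type u) [AddCommGroup D] [Module S D] :
      Nat.card (X →ₗ[S] D × A) = Nat.card (X →ₗ[S] D) * Nat.card (X →ₗ[S] A) := by
    rw [← Nat.card_prod]
    exact Nat.card_congr (LinearMap.prodEquiv (R := S) ℕ).toEquiv.symm
  have he : Nat.card (X →ₗ[S] B × A) = Nat.card (X →ₗ[S] C × A) :=
    Nat.card_congr (LinearEquiv.arrowCongrAddEquiv (LinearEquiv.refl S X) e).toEquiv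
  rw [hprod, hprod] at he
  exact Nat.eq_of_mul_eq_mul_right Nat.card_pos he

end Cancellation

namespace Module.End

variable {S M : Type*} [Ring S] [AddCommGroup M] [Module S M]

open LinearMap

theorem ker_le_ker_pow_mul (α β : Module.End S M) {n : ℕ} (hn : n ≠ 0) :
    ker α ≤ ker ((β * α) ^ n) := by
  obtain ⟨k, rfl⟩ := Nat.exists_eq_succ_of_ne_zero hn
  rw [pow_succ, ← mul_assoc]
  exact ker_le_ker_comp α _

theorem apply_mem_range_pow_mul {α β : Module.End S M} {n : ℕ} {p : M}
    (hp : p ∈ range ((β * α) ^ n)) : α p ∈ range ((α * β) ^ n) := by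
  obtain ⟨q, rfl⟩ := hp
  have hsemiconj : SemiconjBy α (β * α) (α * β) := (mul_assoc α β α).symm
  exact ⟨α q, by rw [← mul_apply, ← mul_apply, (hsemiconj.pow_right n).eq]⟩

theorem exists_linearEquiv_range_pow [Finite M] {α β : Module.End S M} {n : ℕ} (hn : n ≠ 0)
    (hβα : Disjoint (ker ((β * α) ^ n)) (range ((β * α) ^ n)))
    (hαβ : Disjoint (ker ((α * β) ^ n)) (range ((α * β) ^ n))) :
    ∃ φ : range ((β * α) ^ n) ≃ₗ[S] range ((α * β) ^ n), ∀ p, (φ p : M) = α p := by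
  have hα := (injective_restrict_iff fun _ => apply_mem_range_pow_mul).mpr
    (hβα.symm.mono_right (ker_le_ker_pow_mul α β hn))
  have hβ := (injective_restrict_iff fun _ => apply_mem_range_pow_mul).mpr
    (hαβ.symm.mono_right (ker_le_ker_pow_mul β α hn))
  exact ⟨.ofBijective _ (hα.bijective_of_nat_card_le (Nat.card_le_card_of_injective _ hβ)),
    fun _ => rfl⟩

theorem exists_linearEquiv_apply_eq [Finite M] {α β : Module.End S M} {x y : M}
    (hα : α x = y) (hβ : β y = x) : ∃ γ : M ≃ₗ[S] M, γ x = y := by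
  obtain ⟨n, hn, hβα, hαβ⟩ := ((Filter.eventually_ne_atTop 0).and
    ((β * α).eventually_isCompl_ker_pow_range_pow.and
      (α * β).eventually_isCompl_ker_pow_range_pow)).exists
  obtain ⟨φ, hφ⟩ := exists_linearEquiv_range_pow hn hβα.disjoint hαβ.disjoint
  obtain ⟨θ⟩ := nonempty_linearEquiv_of_prod_equiv_prod <|
    (Submodule.prodEquivOfIsCompl _ _ hβα).trans
      ((Submodule.prodEquivOfIsCompl _ _ hαβ).symm.trans ((LinearEquiv.refl _ _).prodCongr φ.symm))
  have hx : x ∈ range ((β * α) ^ n) :=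
    ⟨x, by rw [pow_apply, Function.iterate_fixed (by rw [mul_apply, hα, hβ])]⟩
  refine ⟨(Submodule.prodEquivOfIsCompl _ _ hβα).symm.trans
    ((θ.prodCongr φ).trans (Submodule.prodEquivOfIsCompl _ _ hαβ)), ?_⟩
  have hsplit : (Submodule.prodEquivOfIsCompl _ _ hβα).symm x = (0, ⟨x, hx⟩) :=
    Submodule.prodEquivOfIsCompl_symm_apply_right _ _ hβα ⟨x, hx⟩
  simp [hsplit, hφ, hα]

end Module.End

/-- In a finite ring, elements generating the same principal left ideal are
left associates: `Rx = Ry` implies `y = u x` for some unit `u`. -/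
theorem finite_ring_span_eq_imp_unit_multiple {R : Type*} [Ring R] [Fintype R]
    (x y : R) (h : Ideal.span ({x} : Set R) = Ideal.span ({y} : Set R)) :
    ∃ u : Rˣ, y = (u : R) * x := by
  obtain ⟨a, rfl⟩ := Ideal.mem_span_singleton'.mp (h ▸ Ideal.mem_span_singleton_self y)
  obtain ⟨b, hb⟩ := Ideal.mem_span_singleton'.mp (h ▸ Ideal.mem_span_singleton_self x)
  let e := RingEquiv.moduleEndSelfOp R
  obtain ⟨γ, hγ⟩ :=
    Module.End.exists_linearEquiv_apply_eq (α := e a) (β := e b) (y := a * x) rfl hb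
  have hunit : IsUnit (e.symm γ) := ((Module.End.isUnit_iff _).mpr γ.bijective).map e.symm
  refine ⟨hunit.unit, ?_⟩
  rw [IsUnit.unit_spec, ← hγ]
  exact congrArg (· x) (e.apply_symm_apply γ).symm
end

section
/- Let W = {w : R → ℂ : w(0)=0 and w(ux)=w(x)=w(xu) for all x ∈ R, u ∈ R^×} be the invariant weights and S = {f : R → ℂ : f(xu)=f(x) for all x, u ∈ R^×} modulo ℂδ_0. Then W is a right S-module under the correlation (w ⊛ f)(x) = ∑_r w(rx) f(r); in particular w ⊛ f ∈ W whenever w ∈ W and f is right-invariant. -/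
open Finset

/-- Right correlation `(w ⊛ f)(x) = ∑_r w(rx) f(r)`. -/
noncomputable def corr {R : Type*} [Fintype R] [Ring R] (w f : R → ℂ) : R → ℂ :=
  fun x => ∑ r : R, w (r * x) * f r

section Correlation

variable {R : Type*} [Fintype R] [Ring R] {w f : R → ℂ}

theorem corr_apply_zero (hw0 : w 0 = 0) : corr w f 0 = 0 := by
  simp [corr, hw0]

theorem corr_units_mul (hf : ∀ (u : Rˣ) (x : R), f (x * (u : R)) = f x) (u : Rˣ) (x : R) :
    corr w f ((u : R) * x) = corr w f x := by
  unfold corr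
  rw [← Equiv.sum_comp (Units.mulRight u⁻¹)]
  refine sum_congr rfl fun r _ => ?_
  rw [Units.mulRight_apply, mul_assoc, Units.inv_mul_cancel_left, hf]

theorem corr_mul_units (hwr : ∀ (u : Rˣ) (x : R), w (x * (u : R)) = w x) (u : Rˣ) (x : R) :
    corr w f (x * (u : R)) = corr w f x := by
  unfold corr
  refine sum_congr rfl fun r _ => ?_
  rw [← mul_assoc, hwr]

end Correlation

theorem invariant_weights_right_module_general {R : Type*} [Fintype R] [Ring R]
    (w f : R → ℂ) (hw0 : w 0 = 0)
    (hwr : ∀ (u : Rˣ) (x : R), w (x * (u : R)) = w x)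
    (hf : ∀ (u : Rˣ) (x : R), f (x * (u : R)) = f x) :
    corr w f 0 = 0 ∧
    (∀ (u : Rˣ) (x : R), corr w f ((u : R) * x) = corr w f x) ∧
    (∀ (u : Rˣ) (x : R), corr w f (x * (u : R)) = corr w f x) :=
  ⟨corr_apply_zero hw0, corr_units_mul hf, corr_mul_units hwr⟩

/-- The invariant weights form a right module over the right-invariant
functions under correlation: if `w` is an invariant weight and `f` is
right-invariant, then `w ⊛ f` is again an invariant weight. -/
theorem invariant_weights_right_module {R : Type*} [Fintype R] [Ring R]
    (w f : R → ℂ) (hw0 : w 0 = 0)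
    (hwl : ∀ (u : Rˣ) (x : R), w ((u : R) * x) = w x)
    (hwr : ∀ (u : Rˣ) (x : R), w (x * (u : R)) = w x)
    (hf : ∀ (u : Rˣ) (x : R), f (x * (u : R)) = f x) :
    corr w f 0 = 0 ∧
    (∀ (u : Rˣ) (x : R), corr w f ((u : R) * x) = corr w f x) ∧
    (∀ (u : Rˣ) (x : R), corr w f (x * (u : R)) = corr w f x) :=
  invariant_weights_right_module_general w f hw0 hwr hf
end

section
/- Let R = R₁ × ... × R_r be a finite product of finite chain rings, E the set of ideal representatives, w an invariant weight on R (w(0)=0, w(ux)=w(xu)=w(x) for units u), and for x ∈ E define e^⊥ by (Re)^⊥ = {r : rRe = 0} and η_x = ∑_{x^⊥ ≤ t} μ(0, Rxt) ε_t, where ε_t = |R^× t|^{-1} ∑_{a ∈ R^× t} δ_a. Then (w ⊛ η_x)(y) = ∑_{x^⊥ ≤ t} μ(0, Rxt) w(ty) if Rx ≤ Ry, and (w ⊛ η_x)(y) = 0 if Rx ≰ Ry. -/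
/-!
Correlating with `ε_t` averages `w (a * y)` over the orbit `R^× t`, on which it is constant since
`w` is left invariant; so the first formula holds for every `y`.

Every ideal of `R` is `R p^k` for a unique `k ≤ d`, and `R p^k ≤ R p^m ↔ m ≤ k`: the ideals form a
product of chains. As `μ` is determined by its recursion, `μ(R p^k, R p^m) = ∏ ν(mᵢ, kᵢ)` with `ν`
the Möbius function of `ℕ`. If `Rx ≰ Ry`, then `y_j ∈ R p_j^{x_j+1}` for some `j`. The factor
`ν(x_j + t_j, d_j)` vanishes unless `t_j ∈ {d_j - x_j - 1, d_j - x_j}`, and for both these values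
`p_j^{t_j} y_j = 0`, so the terms cancel in pairs.
-/
open Finset
open scoped Classical

/-- The element `p₁^{t₁} ⋯ p_r^{t_r}` of a product ring. -/
def pelt {r : ℕ} {R : Fin r → Type*} [∀ i, Monoid (R i)]
    (p : ∀ i, R i) (t : Fin r → ℕ) : ∀ i, R i :=
  fun i => p i ^ t i

/-- `ε_t = |R^× t|⁻¹ δ_{R^× t}`, the normalised indicator of the orbit
`R^× t` of the element `t = p₁^{t₁} ⋯ p_r^{t_r}`. -/
noncomputable def eps {r : ℕ} {R : Fin r → Type*} [∀ i, Monoid (R i)]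
    (p : ∀ i, R i) (t : Fin r → ℕ) : (∀ i, R i) → ℂ :=
  fun a =>
    if ∃ u : (∀ i, R i)ˣ, a = (u : ∀ i, R i) * pelt p t then
      ((Nat.card {b : ∀ i, R i // ∃ u : (∀ i, R i)ˣ,
        b = (u : ∀ i, R i) * pelt p t} : ℂ))⁻¹
    else 0

/-- `η_x = ∑_{x^⊥ ≤ t} μ(0, Rxt) ε_t`, where the condition `x^⊥ ≤ t`
(inclusion `R x^⊥ ≤ R t` of principal ideals) amounts to
`tᵢ ≤ dᵢ - xᵢ` for all `i`. -/
noncomputable def eta {r : ℕ} {R : Fin r → Type*} [∀ i, Ring (R i)]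
    (p : ∀ i, R i) (d x : Fin r → ℕ)
    (μ : Ideal (∀ i, R i) → Ideal (∀ i, R i) → ℂ) : (∀ i, R i) → ℂ :=
  fun a => ∑ t : ∀ i, Fin (d i + 1),
    if ∀ i, (t i : ℕ) ≤ d i - x i then
      μ ⊥ (Ideal.span {pelt p x * pelt p (fun i => (t i : ℕ))}) *
        eps p (fun i => (t i : ℕ)) a
    else 0

theorem eq_of_sum_Icc_eq_zero {α M : Type*} [PartialOrder α] [LocallyFiniteOrder α]
    [WellFoundedLT α] [AddCommGroup M] {a c : α} {f g : α → M} (ha : f a = g a)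
    (hf : ∀ b, a < b → b ≤ c → ∑ x ∈ Icc a b, f x = 0)
    (hg : ∀ b, a < b → b ≤ c → ∑ x ∈ Icc a b, g x = 0) {b : α} (hab : a ≤ b) (hbc : b ≤ c) :
    f b = g b := by
  induction b using WellFoundedLT.induction with
  | _ b ih =>
  obtain rfl | hlt := hab.eq_or_lt
  · exact ha
  have hIco : ∑ x ∈ Ico a b, f x = ∑ x ∈ Ico a b, g x := sum_congr rfl fun x hx => by
    obtain ⟨hax, hxb⟩ := mem_Ico.mp hx
    exact ih x hxb hax (hxb.le.trans hbc)
  have hfb := hf b hlt hbc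
  have hgb := hg b hlt hbc
  rw [← Ico_insert_right hab, sum_insert right_notMem_Ico] at hfb hgb
  rw [eq_neg_of_add_eq_zero_left hfb, eq_neg_of_add_eq_zero_left hgb, hIco]

theorem sum_eq_zero_of_comp_involutive_eq_neg {α M : Type*} [Fintype α] [AddCommGroup M]
    [IsAddTorsionFree M] {f : α → M} {σ : α → α} (hσ : Function.Involutive σ)
    (hf : ∀ a, f (σ a) = -f a) : ∑ a, f a = 0 := by
  have h := Fintype.sum_equiv (hσ.toPerm σ) f (fun a => -f a) fun a => by
    rw [Function.Involutive.coe_toPerm, hf, neg_neg]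
  rw [sum_neg_distrib] at h
  exact self_eq_neg.mp h

def chainMobius (a b : ℕ) : ℂ :=
  if a = b then 1 else if a + 1 = b then -1 else 0

theorem chainMobius_eq_zero {a b : ℕ} (h : b < a ∨ a + 1 < b) : chainMobius a b = 0 := by
  simp [chainMobius, show a ≠ b by omega, show a + 1 ≠ b by omega]

theorem sum_Icc_chainMobius {a b : ℕ} (h : a < b) : ∑ c ∈ Icc a b, chainMobius a c = 0 := by
  obtain ⟨n, rfl⟩ : ∃ n, b = a + 1 + n := ⟨b - (a + 1), by omega⟩
  rw [← Ico_add_one_right_eq_Icc, sum_Ico_eq_sum_range, show a + 1 + n + 1 - a = n + 2 by omega]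
  simp [sum_range_succ', chainMobius]

theorem sum_Icc_prod_chainMobius {r : ℕ} {m k : Fin r → ℕ} (h : m < k) :
    ∑ t ∈ Icc m k, ∏ i, chainMobius (m i) (t i) = 0 := by
  obtain ⟨i, hi⟩ := (Pi.lt_def.mp h).2
  rw [Pi.Icc_eq, ← prod_univ_sum (fun i => Icc (m i) (k i)) fun i c => chainMobius (m i) c]
  exact prod_eq_zero (mem_univ i) (sum_Icc_chainMobius hi)

theorem chainMobius_add_swap {x d : ℕ} (h : x < d) (c : ℕ) :
    chainMobius (x + Equiv.swap (d - x - 1) (d - x) c) d = -chainMobius (x + c) d := by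
  rw [Equiv.swap_apply_def]
  split_ifs with h₁ h₂
  · rw [h₁, show x + (d - x) = d by omega, show x + (d - x - 1) = d - 1 by omega]
    simp [chainMobius, show d - 1 ≠ d by omega, show d - 1 + 1 = d by omega]
  · rw [h₂, show x + (d - x) = d by omega, show x + (d - x - 1) = d - 1 by omega]
    simp [chainMobius, show d - 1 ≠ d by omega, show d - 1 + 1 = d by omega]
  · rw [chainMobius_eq_zero (by omega), neg_zero]

/-- Swapping `t j` between `d j - x j - 1` and `d j - x j` flips the sign of the summand. -/
theorem sum_prod_chainMobius_mul_eq_zero {r : ℕ} {d x : Fin r → ℕ} {j : Fin r}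
    (hj : x j < d j) (g : (∀ i, Fin (d i + 1)) → ℂ)
    (hg : ∀ t (c : Fin (d j + 1)), d j ≤ x j + t j + 1 → d j ≤ x j + c + 1 →
      g (Function.update t j c) = g t) :
    ∑ t : ∀ i, Fin (d i + 1), (∏ i, chainMobius (x i + t i) (d i)) * g t = 0 := by
  let s := Equiv.swap (⟨d j - x j - 1, by omega⟩ : Fin (d j + 1)) ⟨d j - x j, by omega⟩
  have hs (c : Fin (d j + 1)) : chainMobius (x j + s c) (d j) = -chainMobius (x j + c) (d j) := by
    rw [Fin.val_injective.map_swap]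
    exact chainMobius_add_swap hj c
  have hle (c : Fin (d j + 1)) (hc : chainMobius (x j + c) (d j) ≠ 0) : d j ≤ x j + c + 1 := by
    by_contra hlt
    exact hc (chainMobius_eq_zero (by omega))
  have hupd (t : ∀ i, Fin (d i + 1)) (c : Fin (d j + 1)) :
      ∏ i, chainMobius (x i + Function.update t j c i) (d i) =
        chainMobius (x j + c) (d j) * ∏ i ∈ univ \ {j}, chainMobius (x i + t i) (d i) := by
    rw [← prod_update_of_mem (mem_univ j)]
    refine prod_congr rfl fun i _ => ?_
    rcases eq_or_ne i j with rfl | hi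
    · simp
    · simp [hi]
  refine sum_eq_zero_of_comp_involutive_eq_neg (σ := fun t => Function.update t j (s (t j)))
    (fun t => by simp [s]) fun t => ?_
  have ht := hupd t (t j)
  rw [Function.update_eq_self] at ht
  simp only [ht, hupd, hs]
  by_cases h0 : chainMobius (x j + t j) (d j) = 0
  · simp [h0]
  · rw [hg t _ (hle _ h0) (hle _ (by rw [hs]; exact neg_ne_zero.mpr h0))]
    ring

section ChainRing

variable {S : Type*} [Ring S] {p : S}

theorem span_pow_le_span_pow {k m : ℕ} (h : m ≤ k) :
    Ideal.span {p ^ k} ≤ Ideal.span {p ^ m} :=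
  (Ideal.span_singleton_le_iff_mem _).mpr <|
    Ideal.mem_span_singleton'.mpr ⟨p ^ (k - m), by rw [← pow_add, Nat.sub_add_cancel h]⟩

theorem exists_mul_eq_one_of_notMem_span (hchain : ∀ I J : Ideal S, I ≤ J ∨ J ≤ I)
    (hp : Ideal.span {p} = Ideal.jacobson ⊥) {a : S} (ha : a ∉ Ideal.span {p}) :
    ∃ b, b * a = 1 := by
  by_contra! h
  have htop : Ideal.span {a} ≠ ⊤ := fun htop => by
    obtain ⟨b, hb⟩ := Ideal.mem_span_singleton'.mp ((Ideal.eq_top_iff_one _).mp htop)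
    exact h b hb
  obtain ⟨M, hM, haM⟩ := Ideal.exists_le_maximal _ htop
  apply ha
  rw [hp, Ideal.jacobson, Submodule.mem_sInf]
  rintro N ⟨-, hN⟩
  obtain rfl : M = N := (hchain M N).elim (hM.eq_of_le hN.ne_top)
    fun h => (hN.eq_of_le hM.ne_top h).symm
  exact haM (Ideal.mem_span_singleton_self a)

theorem exists_pow_mul_eq_mul_pow (hp : Ideal.span {p} = Ideal.jacobson ⊥) (k : ℕ) (s : S) :
    ∃ s', p ^ k * s = s' * p ^ k := by
  induction k generalizing s with
  | zero => exact ⟨s, by simp⟩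
  | succ k ih =>
    -- `Rp` is the Jacobson radical, which is a two-sided ideal
    have hpJ : p ∈ Ring.jacobson S := by
      rw [← Ideal.jacobson_bot, ← hp]
      exact Ideal.mem_span_singleton_self p
    have hps : p * s ∈ Ideal.span {p} := by
      rw [hp, Ideal.jacobson_bot]
      exact Ideal.mul_mem_right s _ hpJ
    obtain ⟨s₁, hs₁⟩ := Ideal.mem_span_singleton'.mp hps
    obtain ⟨s', hs'⟩ := ih s₁
    exact ⟨s', by rw [pow_succ, mul_assoc, ← hs₁, ← mul_assoc, hs', mul_assoc, ← pow_succ]⟩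

theorem pow_notMem_span_pow_succ (hp : Ideal.span {p} = Ideal.jacobson ⊥) {k : ℕ}
    (hk : p ^ k ≠ 0) : p ^ k ∉ Ideal.span {p ^ (k + 1)} := by
  intro h
  obtain ⟨r, hr⟩ := Ideal.mem_span_singleton'.mp h
  have hrp : r * p ∈ Ideal.jacobson ⊥ :=
    hp ▸ Ideal.mul_mem_left _ r (Ideal.mem_span_singleton_self p)
  obtain ⟨z, hz⟩ := Ideal.mem_jacobson_iff.mp hrp (-1)
  have hz1 : z * (1 - r * p) = 1 := by
    rw [Submodule.mem_bot] at hz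
    calc z * (1 - r * p) = z * -1 * (r * p) + z - 1 + 1 := by noncomm_ring
      _ = 1 := by rw [hz, zero_add]
  apply hk
  calc p ^ k = z * (1 - r * p) * p ^ k := by rw [hz1, one_mul]
    _ = z * (p ^ k - r * p ^ (k + 1)) := by
      rw [mul_assoc, sub_mul, one_mul, mul_assoc, ← pow_succ']
    _ = 0 := by rw [hr, sub_self, mul_zero]

theorem pow_mem_span_of_notMem_span_pow_succ (hchain : ∀ I J : Ideal S, I ≤ J ∨ J ≤ I)
    (hp : Ideal.span {p} = Ideal.jacobson ⊥) {a : S} {k : ℕ} (ha : a ∈ Ideal.span {p ^ k})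
    (ha' : a ∉ Ideal.span {p ^ (k + 1)}) : p ^ k ∈ Ideal.span {a} := by
  obtain ⟨r, rfl⟩ := Ideal.mem_span_singleton'.mp ha
  have hr : r ∉ Ideal.span {p} := fun hr => by
    obtain ⟨s, rfl⟩ := Ideal.mem_span_singleton'.mp hr
    exact ha' (Ideal.mem_span_singleton'.mpr ⟨s, by rw [pow_succ', mul_assoc]⟩)
  obtain ⟨b, hb⟩ := exists_mul_eq_one_of_notMem_span hchain hp hr
  exact Ideal.mem_span_singleton'.mpr ⟨b, by rw [← mul_assoc, hb, one_mul]⟩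

theorem mem_span_pow_succ_of_pow_notMem_span (hchain : ∀ I J : Ideal S, I ≤ J ∨ J ≤ I)
    (hp : Ideal.span {p} = Ideal.jacobson ⊥) {y : S} {k : ℕ}
    (hy : p ^ k ∉ Ideal.span {y}) : y ∈ Ideal.span {p ^ (k + 1)} := by
  have hle : Ideal.span {y} ≤ Ideal.span {p ^ k} :=
    (hchain _ _).resolve_right fun h => hy (h (Ideal.mem_span_singleton_self _))
  by_contra h
  exact hy (pow_mem_span_of_notMem_span_pow_succ hchain hp
    (hle (Ideal.mem_span_singleton_self y)) h)

theorem exists_eq_span_pow (hchain : ∀ I J : Ideal S, I ≤ J ∨ J ≤ I)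
    (hp : Ideal.span {p} = Ideal.jacobson ⊥) {d : ℕ} (hd : p ^ d = 0) (I : Ideal S) :
    ∃ k ≤ d, I = Ideal.span {p ^ k} := by
  have hex : ∃ k, Ideal.span {p ^ k} ≤ I := ⟨d, by simp [hd]⟩
  refine ⟨Nat.find hex, Nat.find_min' hex (by simp [hd]), le_antisymm ?_ (Nat.find_spec hex)⟩
  cases hk : Nat.find hex with
  | zero => simp
  | succ k =>
    have hnot : ¬ Ideal.span {p ^ k} ≤ I := Nat.find_min hex (by omega)
    have hI : I ≤ Ideal.span {p ^ k} := (hchain _ _).resolve_right hnot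
    intro a ha
    by_contra ha'
    have hpk : p ^ k ∈ I := (Ideal.span_singleton_le_iff_mem I).mpr ha
      (pow_mem_span_of_notMem_span_pow_succ hchain hp (hI ha) ha')
    exact hnot ((Ideal.span_singleton_le_iff_mem I).mpr hpk)

theorem span_pow_le_span_pow_iff (hp : Ideal.span {p} = Ideal.jacobson ⊥) {d : ℕ}
    (hdmin : ∀ m, p ^ m = 0 → d ≤ m) {k m : ℕ} (hm : m ≤ d) :
    Ideal.span {p ^ k} ≤ Ideal.span {p ^ m} ↔ m ≤ k := by
  refine ⟨fun h => ?_, span_pow_le_span_pow⟩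
  by_contra! hkm
  have hk : p ^ k ≠ 0 := fun h0 => by have := hdmin k h0; omega
  exact pow_notMem_span_pow_succ hp hk
    (span_pow_le_span_pow hkm (h (Ideal.mem_span_singleton_self _)))

theorem pow_mul_eq_zero_of_mem_span_pow (hp : Ideal.span {p} = Ideal.jacobson ⊥) {d : ℕ}
    (hd : p ^ d = 0) {y : S} {k n : ℕ} (hy : y ∈ Ideal.span {p ^ n}) (hkn : d ≤ k + n) :
    p ^ k * y = 0 := by
  obtain ⟨r, rfl⟩ := Ideal.mem_span_singleton'.mp hy
  obtain ⟨s, hs⟩ := exists_pow_mul_eq_mul_pow hp k r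
  rw [← mul_assoc, hs, mul_assoc, ← pow_add, pow_eq_zero_of_le hkn hd, mul_zero]

end ChainRing

theorem Ideal.mem_span_singleton_pi {ι : Type*} {R : ι → Type*} [∀ i, Semiring (R i)]
    {x z : ∀ i, R i} : x ∈ Ideal.span {z} ↔ ∀ i, x i ∈ Ideal.span {z i} := by
  rw [← Ideal.pi_span]
  rfl

theorem Ideal.pi_map_evalRingHom {ι : Type*} [Fintype ι] [DecidableEq ι] {R : ι → Type*}
    [∀ i, Semiring (R i)] (I : Ideal (∀ i, R i)) :
    Ideal.pi (fun i => I.map (Pi.evalRingHom R i)) = I := by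
  refine le_antisymm (fun x hx => ?_) fun x hx i => Ideal.mem_map_of_mem _ hx
  have hsurj : ∀ i, Function.Surjective (Pi.evalRingHom R i) := fun i a =>
    ⟨Pi.single i a, Pi.single_eq_same i a⟩
  choose y hyI hy using fun i => (Ideal.mem_map_iff_of_surjective _ (hsurj i)).mp (hx i)
  rw [← Finset.univ_sum_single x]
  refine Ideal.sum_mem _ fun i _ => ?_
  have hsingle : Pi.single i (x i) = Pi.single i 1 * y i := by
    rw [← Pi.single_mul_left, one_mul, ← hy i]
    rfl
  rw [hsingle]
  exact I.mul_mem_left _ (hyI i)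

section ProductRing

variable {r : ℕ} {R : Fin r → Type*} [∀ i, Ring (R i)] {p : ∀ i, R i} {d : Fin r → ℕ}

theorem pelt_add (k m : Fin r → ℕ) : pelt p (k + m) = pelt p k * pelt p m :=
  funext fun i => pow_add (p i) (k i) (m i)

theorem span_pelt_le_span_pelt_iff
    (hp : ∀ i, Ideal.span ({p i} : Set (R i)) = Ideal.jacobson (⊥ : Ideal (R i)))
    (hdmin : ∀ i, ∀ m : ℕ, p i ^ m = 0 → d i ≤ m) {k m : Fin r → ℕ} (hm : m ≤ d) :
    Ideal.span {pelt p k} ≤ Ideal.span {pelt p m} ↔ m ≤ k := by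
  simp only [Ideal.span_singleton_le_iff_mem, Ideal.mem_span_singleton_pi, Pi.le_def]
  exact forall_congr' fun i => (Ideal.span_singleton_le_iff_mem _).symm.trans
    (span_pow_le_span_pow_iff (hp i) (hdmin i) (hm i))

theorem exists_eq_span_pelt (hchain : ∀ i, ∀ I J : Ideal (R i), I ≤ J ∨ J ≤ I)
    (hp : ∀ i, Ideal.span ({p i} : Set (R i)) = Ideal.jacobson (⊥ : Ideal (R i)))
    (hd : ∀ i, p i ^ d i = 0) (I : Ideal (∀ i, R i)) :
    ∃ k ≤ d, I = Ideal.span {pelt p k} := by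
  choose k hkd hk using fun i =>
    exists_eq_span_pow (hchain i) (hp i) (hd i) (I.map (Pi.evalRingHom R i))
  refine ⟨k, hkd, ?_⟩
  rw [← Ideal.pi_map_evalRingHom I, ← Ideal.pi_span]
  exact congrArg Ideal.pi (funext hk)

theorem span_pelt_eq_bot (hd : ∀ i, p i ^ d i = 0) :
    Ideal.span {pelt p d} = (⊥ : Ideal (∀ i, R i)) :=
  Ideal.span_singleton_eq_bot.mpr (funext hd)
theorem pelt_mul_eq_pelt_mul
    (hp : ∀ i, Ideal.span ({p i} : Set (R i)) = Ideal.jacobson (⊥ : Ideal (R i)))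
    (hd : ∀ i, p i ^ d i = 0) {y : ∀ i, R i} {j : Fin r} {n : ℕ}
    (hy : y j ∈ Ideal.span {p j ^ n}) {k k' : Fin r → ℕ} (hkk' : ∀ i ≠ j, k i = k' i)
    (hk : d j ≤ k j + n) (hk' : d j ≤ k' j + n) : pelt p k * y = pelt p k' * y := by
  funext i
  simp only [Pi.mul_apply, pelt]
  by_cases hij : i = j
  · subst hij
    rw [pow_mul_eq_zero_of_mem_span_pow (hp i) (hd i) hy hk,
      pow_mul_eq_zero_of_mem_span_pow (hp i) (hd i) hy hk']
  · rw [hkk' i hij]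

end ProductRing

section Mobius

variable {r : ℕ} {R : Fin r → Type*} [∀ i, Ring (R i)] [Fintype (Ideal (∀ i, R i))]
  {p : ∀ i, R i} {d : Fin r → ℕ}
  (hchain : ∀ i, ∀ I J : Ideal (R i), I ≤ J ∨ J ≤ I)
  (hp : ∀ i, Ideal.span ({p i} : Set (R i)) = Ideal.jacobson (⊥ : Ideal (R i)))
  (hd : ∀ i, p i ^ d i = 0) (hdmin : ∀ i, ∀ m : ℕ, p i ^ m = 0 → d i ≤ m)
include hchain hp hd hdmin

theorem sum_filter_span_pelt {M : Type*} [AddCommMonoid M] (F : Ideal (∀ i, R i) → M)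
    {k m : Fin r → ℕ} (hk : k ≤ d) (hm : m ≤ d) :
    ∑ K ∈ univ.filter (fun K => Ideal.span {pelt p k} ≤ K ∧ K ≤ Ideal.span {pelt p m}), F K =
      ∑ t ∈ Icc m k, F (Ideal.span {pelt p t}) := by
  have hle {s t : Fin r → ℕ} (ht : t ≤ d) := span_pelt_le_span_pelt_iff (k := s) hp hdmin ht
  symm
  refine sum_nbij (fun t => Ideal.span {pelt p t}) (fun t ht => ?_) (fun s hs t ht hst => ?_)
    (fun K hK => ?_) fun _ _ => rfl
  · obtain ⟨hmt, htk⟩ := mem_Icc.mp ht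
    exact mem_filter.mpr ⟨mem_univ _, (hle (htk.trans hk)).mpr htk, (hle hm).mpr hmt⟩
  · have hsd := (mem_Icc.mp hs).2.trans hk
    have htd := (mem_Icc.mp ht).2.trans hk
    exact le_antisymm ((hle hsd).mp hst.ge) ((hle htd).mp hst.le)
  · obtain ⟨-, hkK, hKm⟩ := mem_filter.mp hK
    obtain ⟨t, htd, rfl⟩ := exists_eq_span_pelt hchain hp hd K
    exact ⟨t, mem_Icc.mpr ⟨(hle hm).mp hKm, (hle htd).mp hkK⟩, rfl⟩

variable (μ : Ideal (∀ i, R i) → Ideal (∀ i, R i) → ℂ)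
  (hdiag : ∀ I : Ideal (∀ i, R i), μ I I = 1)
  (hrec : ∀ I J : Ideal (∀ i, R i), I < J →
    ∑ K ∈ univ.filter (fun K : Ideal (∀ i, R i) => I ≤ K ∧ K ≤ J), μ K J = 0)
include hdiag hrec

theorem mobius_span_pelt {k m : Fin r → ℕ} (hmk : m ≤ k) (hk : k ≤ d) :
    μ (Ideal.span {pelt p k}) (Ideal.span {pelt p m}) = ∏ i, chainMobius (m i) (k i) := by
  have hm := hmk.trans hk
  refine eq_of_sum_Icc_eq_zero (f := fun t => μ (Ideal.span {pelt p t}) (Ideal.span {pelt p m}))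
    (by simp [hdiag, chainMobius]) (fun b hmb hbd => ?_)
    (fun b hmb _ => sum_Icc_prod_chainMobius hmb) hmk hk
  rw [← sum_filter_span_pelt hchain hp hd hdmin (μ · (Ideal.span {pelt p m})) hbd hm]
  refine hrec _ _ (lt_of_le_not_ge ?_ ?_)
  · exact (span_pelt_le_span_pelt_iff hp hdmin hm).mpr hmb.le
  · rw [span_pelt_le_span_pelt_iff hp hdmin hbd]
    exact hmb.not_ge

theorem mobius_bot_span_pelt {k : Fin r → ℕ} (hk : k ≤ d) :
    μ ⊥ (Ideal.span {pelt p k}) = ∏ i, chainMobius (k i) (d i) := by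
  rw [← span_pelt_eq_bot hd]
  exact mobius_span_pelt hchain hp hd hdmin μ hdiag hrec hk le_rfl

end Mobius

section Correlation

variable {r : ℕ} {R : Fin r → Type*} [∀ i, Fintype (R i)]

theorem sum_mul_eps [∀ i, Monoid (R i)] (p : ∀ i, R i) (t : Fin r → ℕ)
    {f : (∀ i, R i) → ℂ} (hf : ∀ (u : (∀ i, R i)ˣ) a, f (u * a) = f a) :
    ∑ a, f a * eps p t a = f (pelt p t) := by
  set O := univ.filter fun a : ∀ i, R i => ∃ u : (∀ i, R i)ˣ, a = u * pelt p t
  have hO : O.Nonempty := ⟨pelt p t, mem_filter.mpr ⟨mem_univ _, 1, (one_mul _).symm⟩⟩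
  have hcard : Nat.card {b : ∀ i, R i // ∃ u : (∀ i, R i)ˣ, b = u * pelt p t} = #O := by
    rw [Nat.card_eq_fintype_card, Fintype.card_subtype]
  calc ∑ a, f a * eps p t a = ∑ a ∈ O, f (pelt p t) * (#O : ℂ)⁻¹ := by
        rw [sum_filter]
        refine sum_congr rfl fun a _ => ?_
        unfold eps
        split_ifs with ha
        · obtain ⟨u, rfl⟩ := ha
          rw [hcard, hf]
        · rw [mul_zero]
    _ = f (pelt p t) := by
        rw [sum_const, nsmul_eq_mul, mul_left_comm,
          mul_inv_cancel₀ (Nat.cast_ne_zero.mpr hO.card_ne_zero), mul_one]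

theorem sum_mul_eta [∀ i, Ring (R i)] (p : ∀ i, R i) (d x : Fin r → ℕ)
    (μ : Ideal (∀ i, R i) → Ideal (∀ i, R i) → ℂ)
    {f : (∀ i, R i) → ℂ} (hf : ∀ (u : (∀ i, R i)ˣ) a, f (u * a) = f a) :
    ∑ a, f a * eta p d x μ a =
      ∑ t : ∀ i, Fin (d i + 1),
        if ∀ i, (t i : ℕ) ≤ d i - x i then
          μ ⊥ (Ideal.span {pelt p x * pelt p (fun i => (t i : ℕ))}) *
            f (pelt p (fun i => (t i : ℕ)))
        else 0 := by
  simp only [eta, mul_sum]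
  rw [sum_comm]
  refine sum_congr rfl fun t _ => ?_
  split_ifs
  · simp only [mul_left_comm (f _), ← mul_sum, sum_mul_eps p _ hf]
  · simp

end Correlation

theorem corr_eta_invariant_weight_general
    (r : ℕ) (R : Fin r → Type*) [∀ i, Ring (R i)] [∀ i, Fintype (R i)]
    [Fintype (Ideal (∀ i, R i))]
    (hchainL : ∀ i, ∀ I J : Ideal (R i), I ≤ J ∨ J ≤ I)
    (p : ∀ i, R i)
    (hp : ∀ i, Ideal.span ({p i} : Set (R i)) = Ideal.jacobson (⊥ : Ideal (R i)))
    (d : Fin r → ℕ) (hd : ∀ i, p i ^ d i = 0)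
    (hdmin : ∀ i, ∀ m : ℕ, p i ^ m = 0 → d i ≤ m)
    (μ : Ideal (∀ i, R i) → Ideal (∀ i, R i) → ℂ)
    (hdiag : ∀ I : Ideal (∀ i, R i), μ I I = 1)
    (hrec : ∀ I J : Ideal (∀ i, R i), I < J →
      ∑ K ∈ univ.filter (fun K : Ideal (∀ i, R i) => I ≤ K ∧ K ≤ J), μ K J = 0)
    (w : (∀ i, R i) → ℂ)
    (hwl : ∀ (u : (∀ i, R i)ˣ) (a : ∀ i, R i), w ((u : ∀ i, R i) * a) = w a)
    (x : Fin r → ℕ) (hx : ∀ i, x i ≤ d i) :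
    ∀ y : ∀ i, R i,
      (Ideal.span {pelt p x} ≤ Ideal.span {y} →
        (∑ a : ∀ i, R i, w (a * y) * eta p d x μ a) =
          ∑ t : ∀ i, Fin (d i + 1),
            if ∀ i, (t i : ℕ) ≤ d i - x i then
              μ ⊥ (Ideal.span {pelt p x * pelt p (fun i => (t i : ℕ))}) *
                w (pelt p (fun i => (t i : ℕ)) * y)
            else 0) ∧
      (¬ Ideal.span {pelt p x} ≤ Ideal.span {y} →
        (∑ a : ∀ i, R i, w (a * y) * eta p d x μ a) = 0) := by
  intro y
  rw [sum_mul_eta p d x μ fun u a => by rw [mul_assoc, hwl]]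
  refine ⟨fun _ => rfl, fun hxy => ?_⟩
  obtain ⟨j, hj⟩ : ∃ j, p j ^ x j ∉ Ideal.span {y j} := by
    by_contra! h
    exact hxy ((Ideal.span_singleton_le_iff_mem _).mpr (Ideal.mem_span_singleton_pi.mpr h))
  have hxj : x j < d j := by
    by_contra! h
    exact hj (by rw [pow_eq_zero_of_le h (hd j)]; exact Ideal.zero_mem _)
  have hyj := mem_span_pow_succ_of_pow_notMem_span (hchainL j) (hp j) hj
  calc _ = ∑ t : ∀ i, Fin (d i + 1),
        (∏ i, chainMobius (x i + t i) (d i)) * w (pelt p (fun i => (t i : ℕ)) * y) := by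
        refine sum_congr rfl fun t _ => ?_
        split_ifs with ht
        · rw [← pelt_add, mobius_bot_span_pelt hchainL hp hd hdmin μ hdiag hrec
            fun i => by have := ht i; have := hx i; simp only [Pi.add_apply]; omega]
          rfl
        · obtain ⟨i, hi⟩ := not_forall.mp ht
          rw [prod_eq_zero (mem_univ i) (chainMobius_eq_zero (by omega)), zero_mul]
    _ = 0 := sum_prod_chainMobius_mul_eq_zero hxj _ fun t c ht hc =>
        congrArg w (pelt_mul_eq_pelt_mul hp hd hyj
          (fun i hi => by simp only [Function.update_of_ne hi])
          (by simp only [Function.update_self]; omega) (by omega))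

/-- Action of correlation with the basis element `η_x` on an invariant
weight `w` over a finite product of finite chain rings:
`(w ⊛ η_x)(y) = ∑_{x^⊥ ≤ t} μ(0,Rxt) w(ty)` if `Rx ≤ Ry`, and `0`
otherwise. -/
theorem corr_eta_invariant_weight
    (r : ℕ) (R : Fin r → Type*) [∀ i, Ring (R i)] [∀ i, Fintype (R i)]
    [∀ i, Nontrivial (R i)] [Fintype (Ideal (∀ i, R i))]
    (hchainL : ∀ i, ∀ I J : Ideal (R i), I ≤ J ∨ J ≤ I)
    (hchainR : ∀ i, ∀ I J : Ideal (R i)ᵐᵒᵖ, I ≤ J ∨ J ≤ I)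
    (p : ∀ i, R i)
    (hp : ∀ i, Ideal.span ({p i} : Set (R i)) = Ideal.jacobson (⊥ : Ideal (R i)))
    (d : Fin r → ℕ) (hd : ∀ i, p i ^ d i = 0)
    (hdmin : ∀ i, ∀ m : ℕ, p i ^ m = 0 → d i ≤ m)
    (μ : Ideal (∀ i, R i) → Ideal (∀ i, R i) → ℂ)
    (hzero : ∀ I J : Ideal (∀ i, R i), ¬ I ≤ J → μ I J = 0)
    (hdiag : ∀ I : Ideal (∀ i, R i), μ I I = 1)
    (hrec : ∀ I J : Ideal (∀ i, R i), I < J →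
      ∑ K ∈ univ.filter (fun K : Ideal (∀ i, R i) => I ≤ K ∧ K ≤ J), μ K J = 0)
    (w : (∀ i, R i) → ℂ) (hw0 : w 0 = 0)
    (hwl : ∀ (u : (∀ i, R i)ˣ) (a : ∀ i, R i), w ((u : ∀ i, R i) * a) = w a)
    (hwr : ∀ (u : (∀ i, R i)ˣ) (a : ∀ i, R i), w (a * (u : ∀ i, R i)) = w a)
    (x : Fin r → ℕ) (hx : ∀ i, x i ≤ d i) (hxne : pelt p x ≠ 0) :
    ∀ y : ∀ i, R i,
      (Ideal.span {pelt p x} ≤ Ideal.span {y} →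
        (∑ a : ∀ i, R i, w (a * y) * eta p d x μ a) =
          ∑ t : ∀ i, Fin (d i + 1),
            if ∀ i, (t i : ℕ) ≤ d i - x i then
              μ ⊥ (Ideal.span {pelt p x * pelt p (fun i => (t i : ℕ))}) *
                w (pelt p (fun i => (t i : ℕ)) * y)
            else 0) ∧
      (¬ Ideal.span {pelt p x} ≤ Ideal.span {y} →
        (∑ a : ∀ i, R i, w (a * y) * eta p d x μ a) = 0) :=
  corr_eta_invariant_weight_general r R hchainL p hp d hd hdmin μ hdiag hrec w hwl x hx
end
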